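/- arXiv:2302.01364 — 3 statements merged into one kernel-verified Lean document; each statement's English description precedes it below -/
import Mathlib

section
/- Let A be an n×n real matrix that is Metzler (all off-diagonal entries nonnegative) and Hurwitz (every eigenvalue of A, regarded as a complex matrix, has strictly negative real part). Then for every ξ > 0 the matrix exp(−ξA) − I is invertible, every entry of Θ(ξ) = (exp(−ξA) − I)^{−1} is nonnegative, and every diagonal entry of Θ(ξ) is strictly positive. -/
open Matrix NormedSpace

/-!
Write `B = exp (ξ • A)`. Then `exp (-ξ • A) - 1 = B⁻¹ (1 - B)`, so once the Neumann series
`∑ Bᵏ` converges, `Θ(ξ) = (∑ Bᵏ) B`. It converges because on the generalized eigenspace of `A`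
for `μ`, `exp (t • A)` acts as `e^{tμ}` times a polynomial in `t`; hence `Bᵏ v` is a sum of terms
`kᵖ (e^{ξμ})ᵏ` with `|e^{ξμ}| = e^{ξ Re μ} < 1`.

For positivity, adding a multiple of `1` makes a Metzler matrix entrywise nonnegative, and the
exponential of a nonnegative matrix is entrywise at least `1` by its power series. So `B ≥ 0`
with positive diagonal, `∑ Bᵏ ≥ 1`, and `Θ(ξ)ᵢᵢ ≥ Bᵢᵢ > 0`.
-/

open scoped Nat

/-- A square real matrix is Metzler if all its off-diagonal entries are nonnegative. -/
def IsMetzler {n : ℕ} (A : Matrix (Fin n) (Fin n) ℝ) : Prop :=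
  ∀ i j, i ≠ j → 0 ≤ A i j

/-- A square real matrix is Hurwitz if every eigenvalue of the matrix, viewed as a complex
matrix, has strictly negative real part. -/
def IsHurwitz {n : ℕ} (A : Matrix (Fin n) (Fin n) ℝ) : Prop :=
  ∀ μ ∈ spectrum ℂ (A.map ((↑) : ℝ → ℂ)), μ.re < 0

namespace Matrix

theorem apply_nonneg_of_hasSum {β m n : Type*} {f : β → Matrix m n ℝ} {S : Matrix m n ℝ}
    (hS : HasSum f S) (hf : ∀ k i j, 0 ≤ f k i j) (i : m) (j : n) : 0 ≤ S i j :=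
  (Pi.hasSum.mp (Pi.hasSum.mp hS i) j).nonneg fun k => hf k i j

theorem apply_le_of_hasSum {β m n : Type*} {f : β → Matrix m n ℝ} {S : Matrix m n ℝ}
    (hS : HasSum f S) (hf : ∀ k i j, 0 ≤ f k i j) (k : β) (i : m) (j : n) : f k i j ≤ S i j :=
  le_hasSum (Pi.hasSum.mp (Pi.hasSum.mp hS i) j) k fun l _ => hf l i j

theorem summable_of_summable_map_ofReal {β m n : Type*} {f : β → Matrix m n ℝ}
    (hf : Summable fun k => (f k).map ((↑) : ℝ → ℂ)) : Summable f :=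
  Pi.summable.mpr fun i => Pi.summable.mpr fun j =>
    Complex.summable_ofReal.mp (Pi.summable.mp (Pi.summable.mp hf i) j)

theorem mul_apply_nonneg {ι R : Type*} [Fintype ι] [Semiring R] [PartialOrder R]
    [IsOrderedRing R] {X Y : Matrix ι ι R} (hX : ∀ i j, 0 ≤ X i j) (hY : ∀ i j, 0 ≤ Y i j)
    (i j : ι) :
    0 ≤ (X * Y) i j :=
  Finset.sum_nonneg fun l _ => mul_nonneg (hX i l) (hY l j)

theorem apply_mul_apply_le_mul_apply {ι R : Type*} [Fintype ι] [Semiring R] [PartialOrder R]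
    [IsOrderedRing R] {X Y : Matrix ι ι R} (hX : ∀ i j, 0 ≤ X i j) (hY : ∀ i j, 0 ≤ Y i j)
    (i j k : ι) :
    X i j * Y j k ≤ (X * Y) i k :=
  Finset.single_le_sum (f := fun l => X i l * Y l k) (fun l _ => mul_nonneg (hX i l) (hY l k))
    (Finset.mem_univ j)

variable {ι : Type*} [Fintype ι] [DecidableEq ι]

section RCLike

variable {𝕂 : Type*} [RCLike 𝕂]

open scoped Norms.Operator in
theorem hasSum_exp (A : Matrix ι ι 𝕂) : HasSum (fun p => (p ! : 𝕂)⁻¹ • A ^ p) (exp A) :=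
  exp_series_hasSum_exp' A

open scoped Norms.Operator in
theorem exp_smul_one_add (c : 𝕂) (X : Matrix ι ι 𝕂) :
    exp (c • (1 : Matrix ι ι 𝕂) + X) = exp c • exp X := by
  have hc : exp (c • (1 : Matrix ι ι 𝕂)) = exp c • 1 := by
    rw [← Algebra.algebraMap_eq_smul_one]
    exact (algebraMap_exp_comm c).symm.trans (Algebra.algebraMap_eq_smul_one _)
  rw [exp_add_of_commute _ _ ((Commute.one_left X).smul_left c), hc, smul_mul_assoc, one_mul]

theorem exp_mulVec_eq_sum_of_pow_mulVec_eq_zero {N : Matrix ι ι 𝕂} {v : ι → 𝕂} {m : ℕ}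
    (hv : N ^ m *ᵥ v = 0) :
    exp N *ᵥ v = ∑ p ∈ Finset.range m, (p ! : 𝕂)⁻¹ • (N ^ p *ᵥ v) := by
  have hsum : HasSum (fun p => (p ! : 𝕂)⁻¹ • (N ^ p *ᵥ v)) (exp N *ᵥ v) := by
    simpa only [Function.comp_def, mulVec.addMonoidHomLeft, AddMonoidHom.coe_mk, ZeroHom.coe_mk,
      smul_mulVec] using (hasSum_exp N).map (mulVec.addMonoidHomLeft v)
        (continuous_id.matrix_mulVec continuous_const)
  refine hsum.unique (hasSum_sum_of_ne_finset_zero fun p hp => ?_)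
  rw [← Nat.sub_add_cancel (not_lt.mp (Finset.mem_range.not.mp hp)), pow_add, ← mulVec_mulVec,
    hv, mulVec_zero, smul_zero]

theorem exp_smul_mulVec_eq_sum_of_pow_sub_mulVec_eq_zero {A : Matrix ι ι 𝕂} {μ : 𝕂} {m : ℕ}
    {v : ι → 𝕂} (hv : (A - μ • 1) ^ m *ᵥ v = 0) (t : 𝕂) :
    exp (t • A) *ᵥ v =
      ∑ p ∈ Finset.range m, (exp (t * μ) * (p ! : 𝕂)⁻¹ * t ^ p) • ((A - μ • 1) ^ p *ᵥ v) := by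
  have htv : (t • (A - μ • 1)) ^ m *ᵥ v = 0 := by rw [smul_pow, smul_mulVec, hv, smul_zero]
  rw [show t • A = (t * μ) • 1 + t • (A - μ • 1) by module, exp_smul_one_add, smul_mulVec,
    exp_mulVec_eq_sum_of_pow_mulVec_eq_zero htv, Finset.smul_sum]
  refine Finset.sum_congr rfl fun p _ => ?_
  rw [smul_pow, smul_mulVec, smul_smul, smul_smul, mul_assoc]

end RCLike

theorem summable_pow_exp_smul_mulVec_of_pow_sub_mulVec_eq_zero {A : Matrix ι ι ℂ} {t μ : ℂ}
    (hμ : (t * μ).re < 0) {m : ℕ} {v : ι → ℂ} (hv : (A - μ • 1) ^ m *ᵥ v = 0) :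
    Summable fun k : ℕ => exp (t • A) ^ k *ᵥ v := by
  have hr : ‖exp (t * μ)‖ < 1 := by
    rwa [← Complex.exp_eq_exp_ℂ, Complex.norm_exp, Real.exp_lt_one_iff]
  have hk : ∀ k : ℕ, exp (t • A) ^ k *ᵥ v = ∑ p ∈ Finset.range m,
      ((k : ℂ) ^ p * exp (t * μ) ^ k) • (((p ! : ℂ)⁻¹ * t ^ p) • ((A - μ • 1) ^ p *ᵥ v)) := by
    intro k
    rw [← exp_nsmul, ← Nat.cast_smul_eq_nsmul ℂ, smul_smul,
      exp_smul_mulVec_eq_sum_of_pow_sub_mulVec_eq_zero hv, ← NormedSpace.exp_nsmul,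
      ← Nat.cast_smul_eq_nsmul ℂ]
    refine Finset.sum_congr rfl fun p _ => ?_
    rw [smul_smul, smul_eq_mul]
    ring_nf
  simp_rw [hk]
  exact summable_sum fun p _ => (summable_pow_mul_geometric_of_norm_lt_one p hr).smul_const _

theorem summable_pow_exp_smul {A : Matrix ι ι ℂ} {t : ℂ}
    (hA : ∀ μ ∈ spectrum ℂ A, (t * μ).re < 0) : Summable fun k : ℕ => exp (t • A) ^ k := by
  have hvec (v : ι → ℂ) : Summable fun k : ℕ => exp (t • A) ^ k *ᵥ v := by
    have hmem : v ∈ ⨆ μ, Module.End.maxGenEigenspace (toLinAlgEquiv' A) μ := by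
      rw [Module.End.iSup_maxGenEigenspace_eq_top]; trivial
    refine Submodule.iSup_induction (motive := fun v => Summable fun k : ℕ => exp (t • A) ^ k *ᵥ v)
      _ hmem (fun μ v hv => ?_) (by simp)
      fun v w hsv hsw => by simpa [mulVec_add] using hsv.add hsw
    obtain ⟨m, hm⟩ := (Module.End.mem_maxGenEigenspace _ _ _).mp hv
    rw [← map_one (toLinAlgEquiv' (n := ι) (R := ℂ)), ← map_smul, ← map_sub, ← map_pow,
      toLinAlgEquiv'_apply] at hm
    by_cases hμ : μ ∈ spectrum ℂ A
    · exact summable_pow_exp_smul_mulVec_of_pow_sub_mulVec_eq_zero (hA μ hμ) hm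
    -- off the spectrum of `A`, the generalized eigenspace is zero
    · have hu : IsUnit ((A - μ • 1) ^ m) := by
        rw [spectrum.notMem_iff, ← neg_sub, IsUnit.neg_iff, Algebra.algebraMap_eq_smul_one] at hμ
        exact hμ.pow m
      rw [eq_zero_of_mulVec_eq_zero ((isUnit_iff_isUnit_det _).mp hu).ne_zero hm]
      simp
  refine Pi.summable.mpr fun i => Pi.summable.mpr fun j => ?_
  simpa [mulVec_single_one] using Pi.summable.mp (hvec (Pi.single j 1)) i

open scoped Norms.Operator in
theorem exp_map_ofReal (A : Matrix ι ι ℝ) :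
    exp (A.map ((↑) : ℝ → ℂ)) = (exp A).map (↑) :=
  (map_exp Complex.ofRealHom.mapMatrix
    (continuous_id.matrix_map Complex.continuous_ofReal) A).symm

theorem inv_sub_one_mul_tsum_pow_mul {R : Type*} [CommRing R] [TopologicalSpace R]
    [IsTopologicalRing R] [T2Space R] {B : Matrix ι ι R} (hB : IsUnit B)
    (hS : Summable (B ^ ·)) : (B⁻¹ - 1) * ((∑' k, B ^ k) * B) = 1 := by
  have hBB : B⁻¹ * B = 1 := nonsing_inv_mul _ ((isUnit_iff_isUnit_det B).mp hB)
  calc (B⁻¹ - 1) * ((∑' k, B ^ k) * B) = B⁻¹ * ((1 - B) * ∑' k, B ^ k) * B := by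
        rw [← mul_assoc B⁻¹, mul_sub, mul_one, hBB, mul_assoc]
    _ = 1 := by rw [hS.one_sub_mul_tsum_pow, mul_one, hBB]

theorem exp_apply_nonneg_of_nonneg {X : Matrix ι ι ℝ} (hX : ∀ i j, 0 ≤ X i j) (i j : ι) :
    0 ≤ exp X i j :=
  apply_nonneg_of_hasSum (hasSum_exp X)
    (fun p i j => mul_nonneg (by positivity) (pow_apply_nonneg hX p i j)) i j

theorem one_le_exp_apply_self_of_nonneg {X : Matrix ι ι ℝ} (hX : ∀ i j, 0 ≤ X i j) (i : ι) :
    1 ≤ exp X i i := by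
  simpa using apply_le_of_hasSum (hasSum_exp X)
    (fun p i j => mul_nonneg (by positivity) (pow_apply_nonneg hX p i j)) 0 i i

end Matrix

section

variable {n : ℕ} {A : Matrix (Fin n) (Fin n) ℝ}

theorem IsMetzler.smul (hA : IsMetzler A) {c : ℝ} (hc : 0 ≤ c) :
    IsMetzler (c • A) :=
  fun i j hij => mul_nonneg hc (hA i j hij)

theorem IsMetzler.exists_nonneg_add_smul_one (hA : IsMetzler A) :
    ∃ c : ℝ, ∀ i j, 0 ≤ (A + c • 1) i j := by
  refine ⟨∑ i, |A i i|, fun i j => ?_⟩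
  rcases eq_or_ne i j with rfl | hij
  · have := Finset.single_le_sum (f := fun i => |A i i|) (fun _ _ => abs_nonneg _)
      (Finset.mem_univ i)
    simp only [Matrix.add_apply, Matrix.smul_apply, one_apply_eq, smul_eq_mul, mul_one]
    linarith [neg_abs_le (A i i)]
  · simpa [one_apply_ne hij] using hA i j hij

theorem IsMetzler.exists_exp_eq_smul_exp (hA : IsMetzler A) :
    ∃ r : ℝ, 0 < r ∧ ∃ Y : Matrix (Fin n) (Fin n) ℝ, (∀ i j, 0 ≤ Y i j) ∧ exp A = r • exp Y := by
  obtain ⟨c, hc⟩ := hA.exists_nonneg_add_smul_one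
  refine ⟨exp (-c), by simpa [← Real.exp_eq_exp_ℝ] using Real.exp_pos (-c), _, hc, ?_⟩
  rw [← exp_smul_one_add]
  congr 1
  module

theorem IsMetzler.exp_apply_nonneg (hA : IsMetzler A) (i j : Fin n) :
    0 ≤ exp A i j := by
  obtain ⟨r, hr, Y, hY, hexp⟩ := hA.exists_exp_eq_smul_exp
  rw [hexp, Matrix.smul_apply, smul_eq_mul]
  exact mul_nonneg hr.le (exp_apply_nonneg_of_nonneg hY i j)

theorem IsMetzler.exp_apply_self_pos (hA : IsMetzler A) (i : Fin n) :
    0 < exp A i i := by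
  obtain ⟨r, hr, Y, hY, hexp⟩ := hA.exists_exp_eq_smul_exp
  rw [hexp, Matrix.smul_apply, smul_eq_mul]
  exact mul_pos hr (one_pos.trans_le (one_le_exp_apply_self_of_nonneg hY i))

theorem IsHurwitz.summable_pow_exp_smul (hA : IsHurwitz A) {ξ : ℝ}
    (hξ : 0 < ξ) : Summable fun k : ℕ => exp (ξ • A) ^ k := by
  have hmap : (ξ : ℂ) • A.map (↑) = (ξ • A).map ((↑) : ℝ → ℂ) := by ext; simp
  have hC := Matrix.summable_pow_exp_smul (t := ξ) (A := A.map (↑)) fun μ hμ => by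
    simpa using mul_neg_of_pos_of_neg hξ (hA μ hμ)
  refine summable_of_summable_map_ofReal (hC.congr fun k => ?_)
  rw [hmap, exp_map_ofReal]
  exact (Matrix.map_pow _ Complex.ofRealHom k).symm

end

theorem stmt0 {n : ℕ} (A : Matrix (Fin n) (Fin n) ℝ)
    (hM : IsMetzler A) (hH : IsHurwitz A) (ξ : ℝ) (hξ : 0 < ξ) :
    IsUnit (exp (-ξ • A) - 1) ∧
    (∀ i j, 0 ≤ ((exp (-ξ • A) - 1)⁻¹ : Matrix (Fin n) (Fin n) ℝ) i j) ∧
    (∀ i, 0 < ((exp (-ξ • A) - 1)⁻¹ : Matrix (Fin n) (Fin n) ℝ) i i) := by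
  set B := exp (ξ • A)
  have hMξ : IsMetzler (ξ • A) := hM.smul hξ.le
  have hS : Summable (B ^ ·) := hH.summable_pow_exp_smul hξ
  have hinv : (exp (-ξ • A) - 1) * ((∑' k, B ^ k) * B) = 1 := by
    rw [neg_smul, Matrix.exp_neg]
    exact inv_sub_one_mul_tsum_pow_mul (isUnit_exp _) hS
  have hpow : ∀ k i j, 0 ≤ (B ^ k) i j := pow_apply_nonneg hMξ.exp_apply_nonneg
  have hSnn : ∀ i j, 0 ≤ (∑' k, B ^ k) i j := apply_nonneg_of_hasSum hS.hasSum hpow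
  rw [inv_eq_right_inv hinv]
  refine ⟨.of_mul_eq_one _ hinv, mul_apply_nonneg hSnn hMξ.exp_apply_nonneg, fun i => ?_⟩
  calc 0 < 1 * B i i := by simpa using hMξ.exp_apply_self_pos i
    _ ≤ (∑' k, B ^ k) i i * B i i := by
      gcongr
      · exact hMξ.exp_apply_nonneg i i
      · simpa using apply_le_of_hasSum hS.hasSum hpow 0 i i
    _ ≤ ((∑' k, B ^ k) * B) i i := apply_mul_apply_le_mul_apply hSnn hMξ.exp_apply_nonneg i i i
end

section
/- Suppose m ≥ 1 is arbitrary, F is non-increasing, Φ is non-decreasing, and (m − 1)/min_i a_i ≤ Φ₁. Then the function R is non-increasing on [0,∞), and the equation of periods y = R(y) has exactly one solution in [0,∞), which is strictly positive. -/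
/-!
Write `u(t) = exp(tA)_{m,1}` and `α = min aᵢ`. Conjugating the lower triangular `A` by `diag(c^i)`
with `c` small makes `‖exp(ξA)‖ < 1`, so `(exp(−ξA) − I)⁻¹ = ∑ₙ exp((n+1)ξA)` and
`R(y) = F(y) T(Φ(y))` with `T(ξ) = ∑ₙ u((n+1)ξ)`.

The entries `u_k(t) = exp(tA)_{k,1}` satisfy `u_{k+1}(t) = g_k ∫₀ᵗ e^{−a_{k+1}(t−s)} u_k(s) ds`, and
this recursion propagates the bound `u_k(ct) ≤ c^k e^{−α(c−1)t} u_k(t)` for `c ≥ 1`. Since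
`c^{m−1} ≤ e^{(m−1)(c−1)}`, `u` is positive and non-increasing on `[(m−1)/α, ∞)`, hence so is `T` on
`[Φ₁, ∞)`. So `R` is positive, continuous and non-increasing, and `y − R(y)` has exactly one zero.
-/

open Matrix NormedSpace

/-- The `m×m` matrix with diagonal entries `-a i`, subdiagonal entries `g i`, zero elsewhere. -/
def igoA (m : ℕ) (a : Fin m → ℝ) (g : Fin (m - 1) → ℝ) : Matrix (Fin m) (Fin m) ℝ :=
  fun i j =>
    if i = j then -a i
    else if h : (i : ℕ) = (j : ℕ) + 1 then g ⟨(j : ℕ), by have := i.isLt; omega⟩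
    else 0

/-- The first standard basis vector `e₁` of `ℝ^m`. -/
def igoB (m : ℕ) : Fin m → ℝ := fun i => if (i : ℕ) = 0 then 1 else 0

/-- The last standard basis vector `e_m` of `ℝ^m` (acting as the row `C = e_mᵀ`). -/
def igoC (m : ℕ) : Fin m → ℝ := fun i => if (i : ℕ) = m - 1 then 1 else 0

/-- The function `R(y) = F(y) · C (exp(−Φ(y)A) − I)⁻¹ B` of the equation of periods. -/
noncomputable def igoR (m : ℕ) (a : Fin m → ℝ) (g : Fin (m - 1) → ℝ)
    (Φ F : ℝ → ℝ) (y : ℝ) : ℝ :=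
  F y * (igoC m ⬝ᵥ ((exp (-(Φ y) • igoA m a g) - 1)⁻¹ :
    Matrix (Fin m) (Fin m) ℝ).mulVec (igoB m))

open Set

theorem exists_unique_fixedPt_of_antitoneOn {R : ℝ → ℝ} (hcont : ContinuousOn R (Ici 0))
    (hanti : AntitoneOn R (Ici 0)) (hpos : ∀ y ≥ 0, 0 < R y) :
    ∃ y, 0 < y ∧ y = R y ∧ ∀ z ≥ 0, z = R z → z = y := by
  have hR0 := hpos 0 le_rfl
  obtain ⟨y, ⟨hy0, -⟩, hy⟩ : (0 : ℝ) ∈ (fun y => y - R y) '' Icc 0 (R 0) := by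
    refine intermediate_value_Icc hR0.le
      (continuousOn_id.sub (hcont.mono Icc_subset_Ici_self)) ⟨by simpa using hR0.le, ?_⟩
    simpa using hanti self_mem_Ici hR0.le hR0.le
  have hyR : y = R y := by linarith [show y - R y = 0 from hy]
  refine ⟨y, hyR ▸ hpos y hy0, hyR, fun z hz hzR => ?_⟩
  rcases lt_trichotomy z y with h | h | h
  · linarith [hanti hz hy0 h.le]
  · exact h
  · linarith [hanti hy0 hz h.le]

noncomputable def expConv (a : ℝ) (f : ℝ → ℝ) (t : ℝ) : ℝ :=
  ∫ s in (0 : ℝ)..t, Real.exp (-(a * (t - s))) * f s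

theorem eq_exp_mul_add_expConv_of_hasDerivAt {v f : ℝ → ℝ} {a : ℝ} (hf : Continuous f)
    (hv : ∀ t, HasDerivAt v (f t - a * v t) t) (t : ℝ) :
    v t = Real.exp (-(a * t)) * v 0 + expConv a f t := by
  have hderiv : ∀ s, HasDerivAt (fun s => Real.exp (a * s) * v s) (Real.exp (a * s) * f s) s := by
    intro s
    have he : HasDerivAt (fun s => Real.exp (a * s)) (Real.exp (a * s) * a) s := by
      simpa using ((hasDerivAt_id s).const_mul a).exp
    exact (he.fun_mul (hv s)).congr_deriv (by ring)
  have hftc := intervalIntegral.integral_eq_sub_of_hasDerivAt (fun s _ => hderiv s)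
    ((by fun_prop : Continuous fun s => Real.exp (a * s) * f s).intervalIntegrable 0 t)
  have hsplit : ∀ s, Real.exp (-(a * (t - s))) * f s =
      Real.exp (-(a * t)) * (Real.exp (a * s) * f s) := fun s => by
    rw [← mul_assoc, ← Real.exp_add]
    ring_nf
  simp_rw [expConv, hsplit, intervalIntegral.integral_const_mul, hftc, mul_zero, Real.exp_zero,
    one_mul, mul_sub, ← mul_assoc, ← Real.exp_add]
  simp

def DecayScaling (α : ℝ) (k : ℕ) (u : ℝ → ℝ) : Prop :=
  ∀ c ≥ (1 : ℝ), ∀ t ≥ (0 : ℝ), u (c * t) ≤ c ^ k * Real.exp (-(α * (c - 1) * t)) * u t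

section DecayScaling

variable {α a : ℝ} {k : ℕ} {u : ℝ → ℝ}

theorem decayScaling_exp_neg_mul (h : α ≤ a) :
    DecayScaling α 0 (fun t => Real.exp (-(a * t))) := by
  intro c hc t ht
  rw [pow_zero, one_mul, ← Real.exp_add, Real.exp_le_exp]
  nlinarith [mul_nonneg (mul_nonneg (sub_nonneg.2 h) (sub_nonneg.2 hc)) ht]

theorem DecayScaling.const_mul (hu : DecayScaling α k u) {g : ℝ} (hg : 0 ≤ g) :
    DecayScaling α k (fun t => g * u t) := fun c hc t ht => by
  have := mul_le_mul_of_nonneg_left (hu c hc t ht) hg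
  linarith

theorem expConv_pos (hcont : Continuous u) (hu : ∀ s > 0, 0 < u s) {t : ℝ} (ht : 0 < t) :
    0 < expConv a u t :=
  intervalIntegral.intervalIntegral_pos_of_pos_on
    ((by fun_prop : Continuous _).intervalIntegrable _ _)
    (fun s hs => mul_pos (Real.exp_pos _) (hu s hs.1)) ht

theorem DecayScaling.expConv (hu : DecayScaling α k u) (hcont : Continuous u)
    (hnn : ∀ s ≥ 0, 0 ≤ u s) (h : α ≤ a) : DecayScaling α (k + 1) (expConv a u) := by
  intro c hc t ht
  have hc0 : 0 < c := by linarith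
  have hsubst : _root_.expConv a u (c * t) =
      c * ∫ s in (0 : ℝ)..t, Real.exp (-(a * (c * t - c * s))) * u (c * s) := by
    rw [intervalIntegral.integral_comp_mul_left (fun σ => Real.exp (-(a * (c * t - σ))) * u σ)
      hc0.ne', mul_zero, smul_eq_mul, mul_inv_cancel_left₀ hc0.ne', _root_.expConv]
  have hpointwise : ∀ s ∈ Icc 0 t, Real.exp (-(a * (c * t - c * s))) * u (c * s) ≤
      c ^ k * Real.exp (-(α * (c - 1) * t)) * (Real.exp (-(a * (t - s))) * u s) := by
    rintro s ⟨hs, hst⟩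
    have hexp : Real.exp (-(a * (c * t - c * s))) * Real.exp (-(α * (c - 1) * s)) ≤
        Real.exp (-(α * (c - 1) * t)) * Real.exp (-(a * (t - s))) := by
      rw [← Real.exp_add, ← Real.exp_add, Real.exp_le_exp]
      nlinarith [mul_nonneg (mul_nonneg (sub_nonneg.2 h) (sub_nonneg.2 hc)) (sub_nonneg.2 hst)]
    calc Real.exp (-(a * (c * t - c * s))) * u (c * s)
        ≤ Real.exp (-(a * (c * t - c * s))) * (c ^ k * Real.exp (-(α * (c - 1) * s)) * u s) :=
          mul_le_mul_of_nonneg_left (hu c hc s hs) (Real.exp_pos _).le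
      _ = c ^ k * u s * (Real.exp (-(a * (c * t - c * s))) * Real.exp (-(α * (c - 1) * s))) := by
          ring
      _ ≤ c ^ k * u s * (Real.exp (-(α * (c - 1) * t)) * Real.exp (-(a * (t - s)))) :=
          mul_le_mul_of_nonneg_left hexp (mul_nonneg (by positivity) (hnn s hs))
      _ = c ^ k * Real.exp (-(α * (c - 1) * t)) * (Real.exp (-(a * (t - s))) * u s) := by ring
  have hmono := intervalIntegral.integral_mono_on (μ := MeasureTheory.volume) ht
    ((by fun_prop : Continuous _).intervalIntegrable _ _)
    ((by fun_prop : Continuous _).intervalIntegrable _ _) hpointwise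
  rw [intervalIntegral.integral_const_mul] at hmono
  rw [hsubst, pow_succ', mul_assoc, mul_assoc, ← mul_assoc (c ^ k)]
  exact mul_le_mul_of_nonneg_left hmono hc0.le

theorem DecayScaling.antitoneOn (hu : DecayScaling α k u) (hnn : ∀ s ≥ 0, 0 ≤ u s) {s₀ : ℝ}
    (hs₀ : 0 < s₀) (hk : k ≤ α * s₀) : AntitoneOn u (Ici s₀) := by
  intro s hs t ht hst
  have hs0 : 0 < s := hs₀.trans_le hs
  set c := t / s
  have hc : 1 ≤ c := (one_le_div hs0).2 hst
  have hfactor : c ^ k * Real.exp (-(α * (c - 1) * s)) ≤ 1 := by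
    calc c ^ k * Real.exp (-(α * (c - 1) * s))
        ≤ Real.exp (c - 1) ^ k * Real.exp (-(α * (c - 1) * s)) := by
          gcongr
          linarith [Real.add_one_le_exp (c - 1)]
      _ = Real.exp ((k - α * s) * (c - 1)) := by
          rw [← Real.exp_nat_mul, ← Real.exp_add]
          ring_nf
      _ ≤ 1 := by
          rw [Real.exp_le_one_iff]
          exact mul_nonpos_of_nonpos_of_nonneg (by nlinarith [mem_Ici.1 hs]) (by linarith)
  calc u t = u (c * s) := by rw [div_mul_cancel₀ t hs0.ne']
    _ ≤ c ^ k * Real.exp (-(α * (c - 1) * s)) * u s := hu c hc s hs0.le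
    _ ≤ u s := mul_le_of_le_one_left (hnn s hs0.le) hfactor

end DecayScaling

namespace Matrix

section Exp

variable {ι : Type*} [Fintype ι] [DecidableEq ι] {m : ℕ}

-- Any submultiplicative norm would do; the ℓ∞ operator norm is explicit on diagonal matrices.
attribute [local instance] Matrix.linftyOpNormedRing Matrix.linftyOpNormedAlgebra

theorem hasDerivAt_exp_smul_apply (A : Matrix ι ι ℝ) (i j : ι) (t : ℝ) :
    HasDerivAt (fun t : ℝ => exp (t • A) i j) ((A * exp (t • A)) i j) t :=
  (LinearMap.toContinuousLinearMap (entryLinearMap ℝ ℝ i j)).hasFDerivAt.comp_hasDerivAt t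
    (hasDerivAt_exp_smul_const' A t)

theorem continuous_exp_smul (A : Matrix ι ι ℝ) : Continuous fun t : ℝ => exp (t • A) :=
  exp_continuous.comp (continuous_id.smul continuous_const)

theorem hasSum_pow_of_norm_conj_lt_one {X : Matrix ι ι ℝ} (U : (Matrix ι ι ℝ)ˣ)
    (h : ‖(U : Matrix ι ι ℝ) * X * (↑U⁻¹ : Matrix ι ι ℝ)‖ < 1) :
    HasSum (fun n => X ^ n) (1 - X)⁻¹ ∧ IsUnit (1 - X) := by
  set Y := (U : Matrix ι ι ℝ) * X * (↑U⁻¹ : Matrix ι ι ℝ)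
  have hconj : ∀ n, (↑U⁻¹ : Matrix ι ι ℝ) * Y ^ n * U = X ^ n := fun n => by
    rw [Units.conj_pow]
    simp only [mul_assoc, Units.inv_mul_cancel_left, Units.inv_mul, mul_one]
  obtain ⟨T, hT, hYT⟩ : ∃ T, HasSum (fun n => Y ^ n) T ∧ (1 - Y) * T = 1 :=
    ⟨_, (summable_geometric_of_norm_lt_one h).hasSum, mul_neg_geom_series Y h⟩
  have hright : (1 - X) * ((↑U⁻¹ : Matrix ι ι ℝ) * T * U) = 1 := by
    have h1X : 1 - X = (↑U⁻¹ : Matrix ι ι ℝ) * (1 - Y) * U := by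
      rw [mul_sub, sub_mul, mul_one, Units.inv_mul, ← pow_one Y, hconj, pow_one]
    calc (1 - X) * ((↑U⁻¹ : Matrix ι ι ℝ) * T * U) = ↑U⁻¹ * ((1 - Y) * T) * U := by
          simp only [h1X, mul_assoc, Units.mul_inv_cancel_left]
      _ = 1 := by rw [hYT, mul_one, Units.inv_mul]
  have hsum : HasSum (fun n => X ^ n) ((↑U⁻¹ : Matrix ι ι ℝ) * T * U) := by
    simpa only [hconj] using (hT.mul_left (↑U⁻¹ : Matrix ι ι ℝ)).mul_right (U : Matrix ι ι ℝ)
  rw [inv_eq_right_inv hright]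
  exact ⟨hsum, (isUnit_iff_isUnit_det _).2 (isUnit_det_of_right_inverse hright)⟩

theorem exists_norm_conj_exp_smul_lt_one {A : Matrix (Fin m) (Fin m) ℝ}
    (hA : A.BlockTriangular OrderDual.toDual) (hdiag : ∀ i, A i i < 0) {ξ : ℝ} (hξ : 0 < ξ) :
    ∃ U : (Matrix (Fin m) (Fin m) ℝ)ˣ,
      ‖(U : Matrix (Fin m) (Fin m) ℝ) * exp (ξ • A) * (↑U⁻¹ : Matrix (Fin m) (Fin m) ℝ)‖ < 1 := by
  -- Conjugation by `D c` scales the entry `(i, j)` by `c ^ (i - j)`; at `c = 0` only the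
  -- diagonal survives, and there the norm of the exponential is `max_i e^{ξ A i i} < 1`.
  let B : ℝ → Matrix (Fin m) (Fin m) ℝ := fun c => of fun i j => c ^ ((i : ℕ) - j) * A i j
  let D : ℝ → Matrix (Fin m) (Fin m) ℝ := fun c => diagonal fun i => c ^ (i : ℕ)
  have hB0 : B 0 = diagonal fun i => A i i := by
    ext i j
    rcases lt_trichotomy i j with h | rfl | h
    · simp [B, hA h, diagonal_apply_ne _ h.ne]
    · simp [B]
    · simp [B, diagonal_apply_ne _ h.ne', Nat.sub_ne_zero_of_lt (Fin.lt_def.1 h)]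
  have hD : ∀ c ≠ 0, D c * D c⁻¹ = 1 := fun c hc => by simp [D, hc]
  have hB : ∀ c ≠ 0, D c * A * D c⁻¹ = B c := by
    intro c hc
    ext i j
    simp only [D, B, diagonal_mul, mul_diagonal, of_apply]
    rcases lt_or_ge i j with h | h
    · simp [hA h]
    · rw [← Nat.sub_add_cancel (Fin.le_def.1 h), pow_add, Nat.add_sub_cancel, inv_pow]
      field_simp
  have hcont : Continuous fun c => exp (ξ • B c) :=
    exp_continuous.comp ((continuous_matrix fun i j => by fun_prop : Continuous B).const_smul ξ)
  have hlim : ‖exp (ξ • B 0)‖ < 1 := by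
    rw [hB0, ← diagonal_smul, exp_diagonal, linfty_opNorm_diagonal, pi_norm_lt_iff one_pos]
    intro i
    rw [Pi.coe_exp, Pi.smul_apply, smul_eq_mul, ← Real.exp_eq_exp_ℝ, Real.norm_eq_abs,
      Real.abs_exp, Real.exp_lt_one_iff]
    exact mul_neg_of_pos_of_neg hξ (hdiag i)
  obtain ⟨c, hc, hc0 : c ≠ 0⟩ := (((hcont.norm.tendsto 0).eventually_lt_const hlim).filter_mono
    nhdsWithin_le_nhds |>.and (self_mem_nhdsWithin (s := {0}ᶜ))).exists
  let U : (Matrix (Fin m) (Fin m) ℝ)ˣ :=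
    ⟨D c, D c⁻¹, hD c hc0, by simpa using hD c⁻¹ (inv_ne_zero hc0)⟩
  refine ⟨U, ?_⟩
  rwa [← exp_units_conj, mul_smul_comm, smul_mul_assoc,
    show (U : Matrix _ _ ℝ) * A * ↑U⁻¹ = B c from hB c hc0]

theorem hasSum_exp_smul_of_blockTriangular {A : Matrix (Fin m) (Fin m) ℝ}
    (hA : A.BlockTriangular OrderDual.toDual) (hdiag : ∀ i, A i i < 0) {ξ : ℝ} (hξ : 0 < ξ) :
    HasSum (fun n : ℕ => exp ((((n : ℝ) + 1) * ξ) • A)) (exp (-ξ • A) - 1)⁻¹ ∧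
      IsUnit (exp (-ξ • A) - 1) := by
  obtain ⟨U, hU⟩ := exists_norm_conj_exp_smul_lt_one hA hdiag hξ
  obtain ⟨hsum, hunit⟩ := hasSum_pow_of_norm_conj_lt_one U hU
  set X := exp (ξ • A)
  have hX : IsUnit X := isUnit_exp _
  have hXdet : IsUnit X.det := (isUnit_iff_isUnit_det X).1 hX
  have hsub : exp (-ξ • A) - 1 = X⁻¹ * (1 - X) := by
    rw [neg_smul, Matrix.exp_neg, mul_sub, mul_one, nonsing_inv_mul _ hXdet]
  rw [hsub, Matrix.mul_inv_rev, nonsing_inv_nonsing_inv _ hXdet]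
  refine ⟨?_, (isUnit_nonsing_inv_iff.2 hX).mul hunit⟩
  have hpow : ∀ n : ℕ, X ^ n * X = exp ((((n : ℝ) + 1) * ξ) • A) := fun n => by
    rw [← pow_succ, ← Matrix.exp_nsmul, ← Nat.cast_smul_eq_nsmul ℝ, smul_smul]
    push_cast
    rfl
  simpa only [hpow] using hsum.mul_right X

theorem continuousOn_inv_exp_neg_smul_sub_one {A : Matrix (Fin m) (Fin m) ℝ}
    (hA : A.BlockTriangular OrderDual.toDual) (hdiag : ∀ i, A i i < 0) :
    ContinuousOn (fun ξ : ℝ => (exp (-ξ • A) - 1)⁻¹) (Ioi 0) := by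
  intro ξ hξ
  have hdet : (exp (-ξ • A) - 1).det ≠ 0 :=
    ((isUnit_iff_isUnit_det _).1 (hasSum_exp_smul_of_blockTriangular hA hdiag hξ).2).ne_zero
  refine (ContinuousAt.comp (g := Inv.inv) ?_ ?_).continuousWithinAt
  · exact continuousAt_matrix_inv _ (by rw [Ring.inverse_eq_inv']; exact continuousAt_inv₀ hdet)
  · exact (((continuous_exp_smul A).comp continuous_neg).sub continuous_const).continuousAt

end Exp

end Matrix

section Chain

variable {m : ℕ} (a : Fin m → ℝ) (g : Fin (m - 1) → ℝ)

theorem igoC_dotProduct_mulVec_igoB (hm : 0 < m) (M : Matrix (Fin m) (Fin m) ℝ) :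
    igoC m ⬝ᵥ M *ᵥ igoB m = M ⟨m - 1, by omega⟩ ⟨0, hm⟩ := by
  have hB : igoB m = Pi.single ⟨0, hm⟩ 1 := by
    ext i
    simp [igoB, Pi.single_apply, Fin.ext_iff]
  have hC : igoC m = Pi.single ⟨m - 1, by omega⟩ 1 := by
    ext i
    simp [igoC, Pi.single_apply, Fin.ext_iff]
  rw [hB, hC, single_dotProduct, mulVec_single_one, one_mul]
  rfl

theorem igoA_apply_self (i : Fin m) : igoA m a g i i = -a i := by simp [igoA]

theorem blockTriangular_igoA : (igoA m a g).BlockTriangular OrderDual.toDual := by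
  intro i j hij
  have hij : (i : ℕ) < j := hij
  simp [igoA, Fin.ext_iff, hij.ne, show (i : ℕ) ≠ j + 1 by omega]

theorem igoA_row_zero (hm : 0 < m) :
    igoA m a g ⟨0, hm⟩ = Pi.single ⟨0, hm⟩ (-a ⟨0, hm⟩) := by
  ext j
  by_cases h : j = ⟨0, hm⟩
  · simp [h, igoA]
  · simp [igoA, h, Ne.symm h]

theorem igoA_row_succ (k : ℕ) (hk : k + 1 < m) :
    igoA m a g ⟨k + 1, hk⟩ =
      Pi.single ⟨k, by omega⟩ (g ⟨k, by omega⟩) + Pi.single ⟨k + 1, hk⟩ (-a ⟨k + 1, hk⟩) := by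
  ext j
  simp only [igoA, Pi.add_apply, Pi.single_apply, Fin.ext_iff]
  split_ifs <;> first | omega | simp_all

noncomputable def igoImpulse (k : Fin m) (t : ℝ) : ℝ := exp (t • igoA m a g) k ⟨0, k.pos⟩

theorem continuous_igoImpulse (k : Fin m) : Continuous (igoImpulse a g k) :=
  continuous_iff_continuousAt.2 fun t => (hasDerivAt_exp_smul_apply _ _ _ t).continuousAt

theorem igoImpulse_zero (k : Fin m) : igoImpulse a g k 0 = if (k : ℕ) = 0 then 1 else 0 := by
  simp [igoImpulse, one_apply, Fin.ext_iff]

theorem igoImpulse_first (hm : 0 < m) :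
    igoImpulse a g ⟨0, hm⟩ = fun t => Real.exp (-(a ⟨0, hm⟩ * t)) := by
  have hderiv : ∀ t, HasDerivAt (igoImpulse a g ⟨0, hm⟩)
      (0 - a ⟨0, hm⟩ * igoImpulse a g ⟨0, hm⟩ t) t := fun t => by
    refine (hasDerivAt_exp_smul_apply (igoA m a g) ⟨0, hm⟩ ⟨0, hm⟩ t).congr_deriv ?_
    rw [mul_apply', igoA_row_zero, single_dotProduct, zero_sub, neg_mul]
    rfl
  funext t
  simp [eq_exp_mul_add_expConv_of_hasDerivAt continuous_const hderiv t, igoImpulse_zero, expConv]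

theorem igoImpulse_succ (k : ℕ) (hk : k + 1 < m) :
    igoImpulse a g ⟨k + 1, hk⟩ =
      fun t => g ⟨k, by omega⟩ * expConv (a ⟨k + 1, hk⟩) (igoImpulse a g ⟨k, by omega⟩) t := by
  have hderiv : ∀ t, HasDerivAt (igoImpulse a g ⟨k + 1, hk⟩)
      (g ⟨k, by omega⟩ * igoImpulse a g ⟨k, by omega⟩ t -
        a ⟨k + 1, hk⟩ * igoImpulse a g ⟨k + 1, hk⟩ t) t := fun t => by
    refine (hasDerivAt_exp_smul_apply (igoA m a g) ⟨k + 1, hk⟩ ⟨0, by omega⟩ t).congr_deriv ?_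
    rw [mul_apply', igoA_row_succ, add_dotProduct, single_dotProduct, single_dotProduct,
      neg_mul, ← sub_eq_add_neg]
    rfl
  funext t
  rw [eq_exp_mul_add_expConv_of_hasDerivAt ((continuous_igoImpulse a g _).const_mul _) hderiv t,
    igoImpulse_zero, expConv, expConv, ← intervalIntegral.integral_const_mul]
  simp [mul_left_comm]

theorem igoImpulse_pos (hg : ∀ i, 0 < g i) (k : ℕ) (hk : k < m) {t : ℝ} (ht : 0 < t) :
    0 < igoImpulse a g ⟨k, hk⟩ t := by
  induction k generalizing t with
  | zero =>
    rw [igoImpulse_first]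
    exact Real.exp_pos _
  | succ k ih =>
    rw [igoImpulse_succ]
    exact mul_pos (hg _) (expConv_pos (continuous_igoImpulse a g _) (fun s hs => ih _ hs) ht)

theorem igoImpulse_nonneg (hg : ∀ i, 0 < g i) (k : Fin m) {t : ℝ} (ht : 0 ≤ t) :
    0 ≤ igoImpulse a g k t := by
  rcases ht.eq_or_lt with rfl | ht
  · rw [igoImpulse_zero]
    split_ifs <;> norm_num
  · exact (igoImpulse_pos a g hg k k.isLt ht).le

theorem decayScaling_igoImpulse (hg : ∀ i, 0 < g i) {α : ℝ} (hα : ∀ i, α ≤ a i) (k : ℕ)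
    (hk : k < m) : DecayScaling α k (igoImpulse a g ⟨k, hk⟩) := by
  induction k with
  | zero =>
    rw [igoImpulse_first]
    exact decayScaling_exp_neg_mul (hα _)
  | succ k ih =>
    rw [igoImpulse_succ]
    exact ((ih _).expConv (continuous_igoImpulse a g _)
      (fun s hs => igoImpulse_nonneg a g hg _ hs) (hα _)).const_mul (hg _).le

noncomputable def igoTransfer (ξ : ℝ) : ℝ :=
  igoC m ⬝ᵥ ((exp (-ξ • igoA m a g) - 1)⁻¹ : Matrix (Fin m) (Fin m) ℝ).mulVec (igoB m)

theorem hasSum_igoTransfer (hm : 0 < m) (ha : ∀ i, 0 < a i) {ξ : ℝ} (hξ : 0 < ξ) :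
    HasSum (fun n : ℕ => igoImpulse a g ⟨m - 1, by omega⟩ ((n + 1) * ξ)) (igoTransfer a g ξ) := by
  have h := (hasSum_exp_smul_of_blockTriangular (blockTriangular_igoA a g)
    (fun i => by simpa [igoA_apply_self] using ha i) hξ).1
  rw [igoTransfer, igoC_dotProduct_mulVec_igoB hm]
  exact Pi.hasSum.1 (Pi.hasSum.1 h _) _

theorem igoTransfer_pos (hm : 0 < m) (ha : ∀ i, 0 < a i) (hg : ∀ i, 0 < g i) {ξ : ℝ}
    (hξ : 0 < ξ) : 0 < igoTransfer a g ξ :=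
  (igoImpulse_pos a g hg _ _ (by positivity)).trans_le <|
    le_hasSum (hasSum_igoTransfer a g hm ha hξ) 0 fun n _ =>
      igoImpulse_nonneg a g hg _ (by positivity)

theorem antitoneOn_igoTransfer (hm : 0 < m) (ha : ∀ i, 0 < a i) (hg : ∀ i, 0 < g i) {α : ℝ}
    (hα : ∀ i, α ≤ a i) {ξ₀ : ℝ} (hξ₀ : 0 < ξ₀) (hm_le : (m : ℝ) - 1 ≤ α * ξ₀) :
    AntitoneOn (igoTransfer a g) (Ici ξ₀) := by
  have hu := (decayScaling_igoImpulse a g hg hα (m - 1) (by omega)).antitoneOn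
    (fun s hs => igoImpulse_nonneg a g hg _ hs) hξ₀ (by rwa [Nat.cast_pred hm])
  have hscale : ∀ ξ ∈ Ici ξ₀, ∀ n : ℕ, ((n : ℝ) + 1) * ξ ∈ Ici ξ₀ := fun ξ hξ n => by
    have : (0 : ℝ) ≤ n * ξ := mul_nonneg n.cast_nonneg (hξ₀.le.trans hξ)
    simp only [mem_Ici] at hξ ⊢
    linarith
  intro ξ₁ h₁ ξ₂ h₂ h₁₂
  have hξ₁ : 0 < ξ₁ := hξ₀.trans_le h₁
  exact hasSum_le (fun n => hu (hscale ξ₁ h₁ n) (hscale ξ₂ h₂ n) (by gcongr))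
    (hasSum_igoTransfer a g hm ha (hξ₁.trans_le h₁₂)) (hasSum_igoTransfer a g hm ha hξ₁)

theorem continuousOn_igoTransfer (ha : ∀ i, 0 < a i) :
    ContinuousOn (igoTransfer a g) (Ioi 0) :=
  (continuous_const.dotProduct (continuous_id.matrix_mulVec continuous_const)).comp_continuousOn
    (continuousOn_inv_exp_neg_smul_sub_one (blockTriangular_igoA a g)
      (fun i => by simpa [igoA_apply_self] using ha i))

end Chain

theorem stmt8_general (m : ℕ) (hm1 : 1 ≤ m)
    (a : Fin m → ℝ) (g : Fin (m - 1) → ℝ)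
    (ha : ∀ i, 0 < a i) (hg : ∀ i, 0 < g i)
    (Φ F : ℝ → ℝ) (hΦcont : ContinuousOn Φ (Set.Ici 0)) (hFcont : ContinuousOn F (Set.Ici 0))
    (hFmono : AntitoneOn F (Set.Ici 0)) (hΦmono : MonotoneOn Φ (Set.Ici 0))
    (Φ₁ Φ₂ F₁ F₂ : ℝ) (hΦ₁ : 0 < Φ₁) (hF₁ : 0 < F₁)
    (hΦ : ∀ y ≥ (0 : ℝ), Φ₁ ≤ Φ y ∧ Φ y ≤ Φ₂)
    (hF : ∀ y ≥ (0 : ℝ), F₁ ≤ F y ∧ F y ≤ F₂)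
    (hsparse : ((m : ℝ) - 1) / (Finset.univ.inf' ⟨⟨0, hm1⟩, Finset.mem_univ _⟩ a) ≤ Φ₁) :
    AntitoneOn (igoR m a g Φ F) (Set.Ici 0) ∧
    (∃ y : ℝ, 0 < y ∧ y = igoR m a g Φ F y ∧
      ∀ z ≥ (0 : ℝ), z = igoR m a g Φ F z → z = y) := by
  have hm : 0 < m := hm1
  set α := Finset.univ.inf' ⟨⟨0, hm1⟩, Finset.mem_univ _⟩ a
  have hα : ∀ i, α ≤ a i := fun i => Finset.inf'_le a (Finset.mem_univ i)
  have hα0 : 0 < α := (Finset.lt_inf'_iff _).2 fun i _ => ha i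
  have hΦpos : ∀ y ≥ 0, 0 < Φ y := fun y hy => hΦ₁.trans_le (hΦ y hy).1
  have hFpos : ∀ y ≥ 0, 0 < F y := fun y hy => hF₁.trans_le (hF y hy).1
  have hT_anti : AntitoneOn (igoTransfer a g) (Ici Φ₁) :=
    antitoneOn_igoTransfer a g hm ha hg hα hΦ₁ (by rwa [div_le_iff₀ hα0, mul_comm] at hsparse)
  have hR : igoR m a g Φ F = fun y => F y * igoTransfer a g (Φ y) := rfl
  have hR_anti : AntitoneOn (igoR m a g Φ F) (Ici 0) := fun y hy z hz hyz => by
    rw [hR]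
    exact mul_le_mul (hFmono hy hz hyz) (hT_anti (hΦ y hy).1 (hΦ z hz).1 (hΦmono hy hz hyz))
      (igoTransfer_pos a g hm ha hg (hΦpos z hz)).le (hFpos y hy).le
  refine ⟨hR_anti, exists_unique_fixedPt_of_antitoneOn ?_ hR_anti fun y hy => ?_⟩
  · rw [hR]
    exact hFcont.mul ((continuousOn_igoTransfer a g ha).comp hΦcont fun y hy => hΦpos y hy)
  · exact mul_pos (hFpos y hy) (igoTransfer_pos a g hm ha hg (hΦpos y hy))

theorem stmt8 (m : ℕ) (hm1 : 1 ≤ m)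
    (a : Fin m → ℝ) (g : Fin (m - 1) → ℝ)
    (ha : ∀ i, 0 < a i) (hg : ∀ i, 0 < g i)
    (Φ F : ℝ → ℝ) (hΦcont : ContinuousOn Φ (Set.Ici 0)) (hFcont : ContinuousOn F (Set.Ici 0))
    (hFmono : AntitoneOn F (Set.Ici 0)) (hΦmono : MonotoneOn Φ (Set.Ici 0))
    (Φ₁ Φ₂ F₁ F₂ : ℝ) (hΦ₁ : 0 < Φ₁) (hΦ₂ : 0 < Φ₂) (hF₁ : 0 < F₁) (hF₂ : 0 < F₂)
    (hΦ : ∀ y ≥ (0 : ℝ), Φ₁ ≤ Φ y ∧ Φ y ≤ Φ₂)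
    (hF : ∀ y ≥ (0 : ℝ), F₁ ≤ F y ∧ F y ≤ F₂)
    (hsparse : ((m : ℝ) - 1) / (Finset.univ.inf' ⟨⟨0, hm1⟩, Finset.mem_univ _⟩ a) ≤ Φ₁) :
    AntitoneOn (igoR m a g Φ F) (Set.Ici 0) ∧
    (∃ y : ℝ, 0 < y ∧ y = igoR m a g Φ F y ∧
      ∀ z ≥ (0 : ℝ), z = igoR m a g Φ F z → z = y) :=
  stmt8_general m hm1 a g ha hg Φ F hΦcont hFcont hFmono hΦmono Φ₁ Φ₂ F₁ F₂ hΦ₁ hF₁ hΦ hF hsparse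
end

section
/- Let ψ(x) = x eˣ/(eˣ − 1)². Then for every x > 0, ψ(x) = Σ_{j=1}^∞ x j e^{−jx}, and for every integer k ≥ 0 the k-th derivative of ψ at x equals ψ^{(k)}(x) = (−1)^k Σ_{j=1}^∞ j^k (x j − k) e^{−jx}. -/
/-!
With `r = e^{-x}` we have `ψ(x) = x r / (1 - r)² = x ∑ n rⁿ`.
Each term `nᵏ (x n - k) e^{-n x}` has derivative `-nᵏ⁺¹ (x n - (k + 1)) e^{-n x}`, so the series
for `ψ⁽ᵏ⁾` differentiates termwise into the one for `ψ⁽ᵏ⁺¹⁾`. On `(x/2, 2x)` the terms are dominated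
by `nᵏ (2 x n + k) e^{-n x / 2}`, which is summable, so termwise differentiation is legitimate.
-/

/-- The function `ψ(x) = x eˣ/(eˣ − 1)²`. -/
noncomputable def psiIGO (x : ℝ) : ℝ := x * Real.exp x / (Real.exp x - 1) ^ 2

open Real Set

noncomputable def powExpTerm (k : ℕ) (n x : ℝ) : ℝ := n ^ k * (x * n - k) * exp (-n * x)

lemma hasDerivAt_powExpTerm (k : ℕ) (n x : ℝ) :
    HasDerivAt (powExpTerm k n) (-powExpTerm (k + 1) n x) x := by
  have hlin : HasDerivAt (fun y => n ^ k * (y * n - k)) (n ^ k * n) x := by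
    simpa using (((hasDerivAt_id x).mul_const n).sub_const (k : ℝ)).const_mul (n ^ k)
  have hexp : HasDerivAt (fun y => exp (-n * y)) (exp (-n * x) * -n) x := by
    simpa using ((hasDerivAt_id x).const_mul (-n)).exp
  refine (hlin.mul hexp).congr_deriv ?_
  rw [powExpTerm]
  push_cast
  ring

lemma abs_powExpTerm_le {n x y : ℝ} (k : ℕ) (hn : 0 ≤ n) (hy : y ∈ Ioo (x / 2) (2 * x)) :
    |powExpTerm k n y| ≤ n ^ k * (2 * x * n + k) * exp (-n * (x / 2)) := by
  obtain ⟨hxy, hyx⟩ := hy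
  have hx0 : 0 ≤ x := by linarith
  have hy0 : 0 ≤ y := by linarith
  have hlin : |y * n - k| ≤ 2 * x * n + k := by
    rw [abs_le]
    constructor <;> nlinarith [mul_nonneg hy0 hn, k.cast_nonneg (α := ℝ)]
  have hexp : exp (-n * y) ≤ exp (-n * (x / 2)) :=
    exp_le_exp.2 (by nlinarith)
  rw [powExpTerm, abs_mul, abs_mul, abs_of_nonneg (by positivity : 0 ≤ n ^ k), abs_exp]
  gcongr

lemma summable_succ_pow_mul_exp_neg (m : ℕ) {r : ℝ} (hr : 0 < r) :
    Summable fun j : ℕ => ((j : ℝ) + 1) ^ m * exp (-((j : ℝ) + 1) * r) := by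
  refine ((summable_nat_add_iff 1).2 (Real.summable_pow_mul_exp_neg_nat_mul m hr)).congr
    fun j => ?_
  push_cast
  ring_nf

lemma summable_powExpTerm_bound (k : ℕ) {x : ℝ} (hx : 0 < x) :
    Summable fun j : ℕ =>
      ((j : ℝ) + 1) ^ k * (2 * x * ((j : ℝ) + 1) + k) * exp (-((j : ℝ) + 1) * (x / 2)) := by
  have hr : 0 < x / 2 := by linarith
  refine (((summable_succ_pow_mul_exp_neg (k + 1) hr).mul_left (2 * x)).add
    ((summable_succ_pow_mul_exp_neg k hr).mul_left (k : ℝ))).congr fun j => ?_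
  ring

lemma summable_powExpTerm (k : ℕ) {x : ℝ} (hx : 0 < x) :
    Summable fun j : ℕ => powExpTerm k ((j : ℝ) + 1) x :=
  (summable_powExpTerm_bound k hx).of_norm_bounded fun j =>
    abs_powExpTerm_le k (by positivity) ⟨by linarith, by linarith⟩

lemma hasDerivAt_tsum_powExpTerm (k : ℕ) {x : ℝ} (hx : 0 < x) :
    HasDerivAt (fun y => ∑' j : ℕ, powExpTerm k ((j : ℝ) + 1) y)
      (-∑' j : ℕ, powExpTerm (k + 1) ((j : ℝ) + 1) x) x := by
  have hmem : x ∈ Ioo (x / 2) (2 * x) := ⟨by linarith, by linarith⟩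
  rw [← tsum_neg]
  refine hasDerivAt_tsum_of_isPreconnected (summable_powExpTerm_bound (k + 1) hx) isOpen_Ioo
    isPreconnected_Ioo (fun j y _ => hasDerivAt_powExpTerm k _ y) (fun j y hy => ?_) hmem
    (summable_powExpTerm k hx) hmem
  rw [norm_neg, Real.norm_eq_abs]
  convert abs_powExpTerm_le (k + 1) (n := (j : ℝ) + 1) (by positivity) hy using 2

lemma psiIGO_eq_tsum {x : ℝ} (hx : 0 < x) :
    psiIGO x = ∑' j : ℕ, x * ((j : ℝ) + 1) * exp (-((j : ℝ) + 1) * x) := by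
  set r := exp (-x)
  have hr : ‖r‖ < 1 := by
    rw [norm_of_nonneg (exp_nonneg _), exp_lt_one_iff]
    linarith
  have hshift : ∑' j : ℕ, ((j : ℝ) + 1) * r ^ (j + 1) = r / (1 - r) ^ 2 := by
    have hsum : Summable fun n : ℕ => (n : ℝ) * r ^ n := by
      simpa using summable_pow_mul_geometric_of_norm_lt_one 1 hr
    rw [← tsum_coe_mul_geometric_of_norm_lt_one hr, hsum.tsum_eq_zero_add]
    simp
  have hterm (j : ℕ) :
      x * ((j : ℝ) + 1) * exp (-((j : ℝ) + 1) * x) = x * (((j : ℝ) + 1) * r ^ (j + 1)) := by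
    rw [← exp_nat_mul]
    push_cast
    ring_nf
  have hex : exp x * r = 1 := by rw [← exp_add, add_neg_cancel, exp_zero]
  have hex1 : exp x - 1 ≠ 0 := (sub_pos.2 (one_lt_exp_iff.2 hx)).ne'
  have hr1 : 1 - r ≠ 0 := by
    rw [sub_ne_zero]
    exact (norm_of_nonneg (exp_nonneg _) ▸ hr).ne'
  rw [tsum_congr hterm, tsum_mul_left, hshift, psiIGO]
  field_simp
  linear_combination (r - exp x) * hex

noncomputable def psiDerivSeries (k : ℕ) (x : ℝ) : ℝ :=
  (-1) ^ k * ∑' j : ℕ, powExpTerm k ((j : ℝ) + 1) x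

lemma hasDerivAt_psiDerivSeries (k : ℕ) {x : ℝ} (hx : 0 < x) :
    HasDerivAt (psiDerivSeries k) (psiDerivSeries (k + 1) x) x := by
  refine ((hasDerivAt_tsum_powExpTerm k hx).const_mul ((-1) ^ k)).congr_deriv ?_
  rw [psiDerivSeries, pow_succ]
  ring

lemma psiIGO_eq_psiDerivSeries_zero {x : ℝ} (hx : 0 < x) : psiIGO x = psiDerivSeries 0 x := by
  simp [psiIGO_eq_tsum hx, psiDerivSeries, powExpTerm, mul_comm x]

lemma eqOn_iteratedDeriv_psiIGO (k : ℕ) :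
    EqOn (iteratedDeriv k psiIGO) (psiDerivSeries k) (Ioi 0) := by
  induction k with
  | zero => exact fun x hx => psiIGO_eq_psiDerivSeries_zero hx
  | succ k ih =>
    intro x hx
    rw [iteratedDeriv_succ, ih.deriv isOpen_Ioi hx]
    exact (hasDerivAt_psiDerivSeries k hx).deriv

theorem stmt13 (x : ℝ) (hx : 0 < x) :
    psiIGO x = (∑' j : ℕ, x * ((j : ℝ) + 1) * Real.exp (-((j : ℝ) + 1) * x)) ∧
    ∀ k : ℕ, iteratedDeriv k psiIGO x =
      (-1) ^ k * ∑' j : ℕ,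
        ((j : ℝ) + 1) ^ k * (x * ((j : ℝ) + 1) - (k : ℝ)) * Real.exp (-((j : ℝ) + 1) * x) :=
  ⟨psiIGO_eq_tsum hx, fun k => eqOn_iteratedDeriv_psiIGO k hx⟩
end
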